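/- Let s_U > 0, s_V > 0, ζ ∈ ℝ, and set σ = √(s_U² + s_V²), λ = s_U/s_V, ξ = ζ/(λσ). Then ∫_ℝ ω · (1/σ) Φ(ξ − λω/σ) φ((ω + ζ)/σ) dω = −ζ Φ(ζ/s_U) − s_U φ(ζ/s_U). In words: the partial first moment of the first extended skew-normal component of the closed-form conditional density of the composite error term equals minus the partial mean over (0,∞) of the normal distribution with mean ζ and variance s_U². -/

import Mathlib

open MeasureTheory

/-- The standard normal density. -/
noncomputable def stdNormalPDF (x : ℝ) : ℝ :=
  (Real.sqrt (2 * Real.pi))⁻¹ * Real.exp (-x ^ 2 / 2)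

/-- The standard normal cumulative distribution function. -/
noncomputable def stdNormalCDF (x : ℝ) : ℝ :=
  ∫ t in Set.Iio x, stdNormalPDF t

/-!
Substituting `ω = σ x - ζ` turns the integral into `σ 𝔼[(X - ζ/σ) Φ(c - λ X)]` for a standard
normal `X`, where `c = ξ + λ ζ / σ`. Both expectations are classical. Completing the square gives
`𝔼 φ(a + b X) = φ(a/s)/s` with `s = √(1 + b²)`; this is the derivative in `a` of `𝔼 Φ(a + b X)`,
and of `Φ(a/s)`, and both vanish as `a → -∞`, so `𝔼 Φ(a + b X) = Φ(a/s)`. Stein's identity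
`𝔼[X g(X)] = 𝔼 g'(X)` then gives `𝔼[X Φ(a + b X)] = b φ(a/s)/s`. Finally `√(1 + λ²) = σ / s_V`
and `c s_V / σ = ζ / s_U`.
-/

open Real Set Filter Topology ProbabilityTheory

lemma stdNormalPDF_eq_gaussianPDFReal : stdNormalPDF = gaussianPDFReal 0 1 := by
  ext x; simp [stdNormalPDF, gaussianPDFReal]

lemma stdNormalPDF_nonneg (x : ℝ) : 0 ≤ stdNormalPDF x := by
  unfold stdNormalPDF; positivity

lemma stdNormalPDF_le (x : ℝ) : stdNormalPDF x ≤ (√(2 * π))⁻¹ :=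
  mul_le_of_le_one_right (by positivity) (exp_le_one_iff.2 (by nlinarith [sq_nonneg x]))

@[fun_prop]
lemma continuous_stdNormalPDF : Continuous stdNormalPDF := by
  unfold stdNormalPDF; fun_prop

lemma integrable_stdNormalPDF : Integrable stdNormalPDF :=
  stdNormalPDF_eq_gaussianPDFReal ▸ integrable_gaussianPDFReal 0 1

lemma integral_stdNormalPDF : ∫ x, stdNormalPDF x = 1 := by
  rw [stdNormalPDF_eq_gaussianPDFReal]; exact integral_gaussianPDFReal_eq_one 0 one_ne_zero

lemma integrable_id_mul_stdNormalPDF : Integrable fun x => x * stdNormalPDF x := by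
  refine ((integrable_mul_exp_neg_mul_sq (by norm_num : (0 : ℝ) < 1 / 2)).const_mul
    (√(2 * π))⁻¹).congr (.of_forall fun x => ?_)
  simp only [stdNormalPDF]; ring_nf

lemma hasDerivAt_stdNormalPDF (x : ℝ) : HasDerivAt stdNormalPDF (-x * stdNormalPDF x) x := by
  have hexp : HasDerivAt (fun y : ℝ => -y ^ 2 / 2) (-x) x := by
    simpa using ((hasDerivAt_pow 2 x).neg.div_const 2).congr_deriv (by ring)
  exact ((hexp.exp).const_mul (√(2 * π))⁻¹).congr_deriv (by simp only [stdNormalPDF]; ring)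

lemma tendsto_stdNormalPDF_cocompact : Tendsto stdNormalPDF (cocompact ℝ) (𝓝 0) := by
  have hsq : Tendsto (fun x : ℝ => -x ^ 2 / 2) (cocompact ℝ) atBot := by
    refine (tendsto_neg_atTop_atBot.comp ?_).atBot_div_const two_pos
    simpa [Function.comp_def, sq_abs] using
      (tendsto_pow_atTop two_ne_zero).comp (tendsto_norm_cocompact_atTop (E := ℝ))
  exact (mul_zero (√(2 * π))⁻¹) ▸ (tendsto_exp_atBot.comp hsq).const_mul (√(2 * π))⁻¹

lemma integrable_mul_stdNormalPDF_of_abs_le {f : ℝ → ℝ} {C : ℝ} (hf : Continuous f)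
    (hC : ∀ x, |f x| ≤ C) : Integrable fun x => f x * stdNormalPDF x :=
  integrable_stdNormalPDF.bdd_mul hf.aestronglyMeasurable (.of_forall hC)

lemma integrable_id_mul_mul_stdNormalPDF_of_abs_le {f : ℝ → ℝ} {C : ℝ} (hf : Continuous f)
    (hC : ∀ x, |f x| ≤ C) : Integrable fun x => x * f x * stdNormalPDF x :=
  (integrable_id_mul_stdNormalPDF.bdd_mul hf.aestronglyMeasurable (.of_forall hC)).congr
    (.of_forall fun x => by ring)

lemma integral_mul_stdNormalPDF_eq_integral_deriv_mul {g g' : ℝ → ℝ} {C : ℝ}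
    (hg : ∀ x, HasDerivAt g (g' x) x) (hgC : ∀ x, |g x| ≤ C)
    (hg' : Integrable fun x => g' x * stdNormalPDF x) :
    ∫ x, x * g x * stdNormalPDF x = ∫ x, g' x * stdNormalPDF x := by
  have hgφ : ∀ x, ‖g x * stdNormalPDF x‖ ≤ C * stdNormalPDF x := fun x => by
    rw [norm_mul, norm_of_nonneg (stdNormalPDF_nonneg x)]
    exact mul_le_mul_of_nonneg_right (hgC x) (stdNormalPDF_nonneg x)
  have hlim : Tendsto (fun x => g x * stdNormalPDF x) (cocompact ℝ) (𝓝 0) :=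
    squeeze_zero_norm hgφ (by simpa using tendsto_stdNormalPDF_cocompact.const_mul C)
  have hgv' : Integrable fun x => g x * (-x * stdNormalPDF x) :=
    (integrable_id_mul_mul_stdNormalPDF_of_abs_le
      (continuous_iff_continuousAt.2 fun x => (hg x).continuousAt) hgC).neg.congr
      (.of_forall fun x => by simp only [Pi.neg_apply]; ring)
  have hparts := integral_mul_deriv_eq_deriv_mul (fun x _ => hg x)
    (fun x _ => hasDerivAt_stdNormalPDF x) hgv' hg'
    (hlim.mono_left atBot_le_cocompact) (hlim.mono_left atTop_le_cocompact)
  calc ∫ x, x * g x * stdNormalPDF x = -∫ x, g x * (-x * stdNormalPDF x) := by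
        rw [← integral_neg]; congr 1; ext x; ring
    _ = ∫ x, g' x * stdNormalPDF x := by rw [hparts]; ring

lemma stdNormalCDF_nonneg (x : ℝ) : 0 ≤ stdNormalCDF x :=
  setIntegral_nonneg measurableSet_Iio fun t _ => stdNormalPDF_nonneg t

lemma stdNormalCDF_le_one (x : ℝ) : stdNormalCDF x ≤ 1 :=
  integral_stdNormalPDF ▸
    setIntegral_le_integral integrable_stdNormalPDF (.of_forall stdNormalPDF_nonneg)

lemma abs_stdNormalCDF_le_one (x : ℝ) : |stdNormalCDF x| ≤ 1 :=
  abs_le.2 ⟨by linarith [stdNormalCDF_nonneg x], stdNormalCDF_le_one x⟩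

lemma stdNormalCDF_eq_sub_intervalIntegral (x : ℝ) :
    stdNormalCDF x = (∫ t in Iic 0, stdNormalPDF t) - ∫ t in x..0, stdNormalPDF t := by
  rw [← intervalIntegral.integral_Iic_sub_Iic integrable_stdNormalPDF.integrableOn
    integrable_stdNormalPDF.integrableOn, sub_sub_cancel, stdNormalCDF, integral_Iic_eq_integral_Iio]

lemma hasDerivAt_stdNormalCDF (x : ℝ) : HasDerivAt stdNormalCDF (stdNormalPDF x) x := by
  have h := (intervalIntegral.integral_hasDerivAt_left
    (integrable_stdNormalPDF.intervalIntegrable (a := x) (b := 0))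
    (continuous_stdNormalPDF.stronglyMeasurableAtFilter _ _)
    continuous_stdNormalPDF.continuousAt).const_sub (∫ t in Iic 0, stdNormalPDF t)
  rw [neg_neg] at h
  exact h.congr_of_eventuallyEq (.of_forall stdNormalCDF_eq_sub_intervalIntegral)

@[fun_prop]
lemma continuous_stdNormalCDF : Continuous stdNormalCDF :=
  continuous_iff_continuousAt.2 fun x => (hasDerivAt_stdNormalCDF x).continuousAt

lemma tendsto_stdNormalCDF_atBot : Tendsto stdNormalCDF atBot (𝓝 0) := by
  have h := (intervalIntegral_tendsto_integral_Iic 0 integrable_stdNormalPDF.integrableOn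
    tendsto_id).const_sub (∫ t in Iic 0, stdNormalPDF t)
  rw [sub_self] at h
  exact h.congr fun x => (stdNormalCDF_eq_sub_intervalIntegral x).symm

lemma integral_stdNormalPDF_comp_mul_add {s : ℝ} (hs : 0 < s) (c : ℝ) :
    ∫ x, stdNormalPDF (s * x + c) = s⁻¹ := by
  rw [Measure.integral_comp_mul_left (fun x => stdNormalPDF (x + c)), integral_add_right_eq_self,
    integral_stdNormalPDF, abs_of_pos (inv_pos.2 hs), smul_eq_mul, mul_one]

lemma stdNormalPDF_mul_stdNormalPDF (a b x : ℝ) :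
    stdNormalPDF (a + b * x) * stdNormalPDF x =
      stdNormalPDF (a / √(1 + b ^ 2)) *
        stdNormalPDF (√(1 + b ^ 2) * x + a * b / √(1 + b ^ 2)) := by
  have hs : 0 < √(1 + b ^ 2) := sqrt_pos.2 (by positivity)
  have hs2 : √(1 + b ^ 2) ^ 2 = 1 + b ^ 2 := sq_sqrt (by positivity)
  simp only [stdNormalPDF]
  rw [mul_mul_mul_comm, mul_mul_mul_comm _ (exp _), ← exp_add, ← exp_add]
  congr 2
  field_simp
  rw [hs2]; ring

lemma integral_stdNormalPDF_affine_mul (a b : ℝ) :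
    ∫ x, stdNormalPDF (a + b * x) * stdNormalPDF x =
      stdNormalPDF (a / √(1 + b ^ 2)) / √(1 + b ^ 2) := by
  rw [funext (stdNormalPDF_mul_stdNormalPDF a b), integral_const_mul,
    integral_stdNormalPDF_comp_mul_add (sqrt_pos.2 (by positivity)), ← div_eq_mul_inv]

lemma hasDerivAt_integral_stdNormalCDF_affine_mul (a b : ℝ) :
    HasDerivAt (fun a => ∫ x, stdNormalCDF (a + b * x) * stdNormalPDF x)
      (stdNormalPDF (a / √(1 + b ^ 2)) / √(1 + b ^ 2)) a := by
  have h := hasDerivAt_integral_of_dominated_loc_of_deriv_le (x₀ := a) (s := univ)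
    (F' := fun a x => stdNormalPDF (a + b * x) * stdNormalPDF x)
    (bound := fun x => (√(2 * π))⁻¹ * stdNormalPDF x) univ_mem
    (.of_forall fun a => (integrable_mul_stdNormalPDF_of_abs_le (by fun_prop)
      fun x => abs_stdNormalCDF_le_one (a + b * x)).aestronglyMeasurable)
    (integrable_mul_stdNormalPDF_of_abs_le (by fun_prop)
      fun x => abs_stdNormalCDF_le_one (a + b * x))
    (by fun_prop)
    (.of_forall fun x a _ => by
      rw [norm_mul, norm_of_nonneg (stdNormalPDF_nonneg _), norm_of_nonneg (stdNormalPDF_nonneg _)]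
      exact mul_le_mul_of_nonneg_right (stdNormalPDF_le _) (stdNormalPDF_nonneg x))
    (integrable_stdNormalPDF.const_mul _)
    (.of_forall fun x a _ => by
      simpa using ((hasDerivAt_stdNormalCDF (a + b * x)).comp a
        ((hasDerivAt_id a).add_const (b * x))).mul_const (stdNormalPDF x))
  exact integral_stdNormalPDF_affine_mul a b ▸ h.2

lemma tendsto_integral_stdNormalCDF_affine_mul_atBot (b : ℝ) :
    Tendsto (fun a => ∫ x, stdNormalCDF (a + b * x) * stdNormalPDF x) atBot (𝓝 0) := by
  have h := tendsto_integral_filter_of_dominated_convergence (l := atBot) (bound := stdNormalPDF)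
    (F := fun a x => stdNormalCDF (a + b * x) * stdNormalPDF x) (f := fun _ => 0)
    (.of_forall fun a => by fun_prop)
    (.of_forall fun a => .of_forall fun x => by
      rw [norm_mul, norm_of_nonneg (stdNormalPDF_nonneg x)]
      exact mul_le_of_le_one_left (stdNormalPDF_nonneg x) (abs_stdNormalCDF_le_one _))
    integrable_stdNormalPDF
    (.of_forall fun x => by
      simpa using (tendsto_stdNormalCDF_atBot.comp
        (tendsto_atBot_add_const_right _ (b * x) tendsto_id)).mul_const (stdNormalPDF x))
  simpa using h

lemma integral_stdNormalCDF_affine_mul (a b : ℝ) :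
    ∫ x, stdNormalCDF (a + b * x) * stdNormalPDF x = stdNormalCDF (a / √(1 + b ^ 2)) := by
  set s := √(1 + b ^ 2)
  have hs : 0 < s := sqrt_pos.2 (by positivity)
  set D := fun a => (∫ x, stdNormalCDF (a + b * x) * stdNormalPDF x) - stdNormalCDF (a / s)
  have hD : ∀ a, HasDerivAt D 0 a := fun a => by
    have hΦ := (hasDerivAt_stdNormalCDF (a / s)).comp a ((hasDerivAt_id a).div_const s)
    rw [mul_one_div] at hΦ
    exact ((hasDerivAt_integral_stdNormalCDF_affine_mul a b).sub hΦ).congr_deriv (sub_self _)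
  have hD_const : Tendsto D atBot (𝓝 (D a)) :=
    tendsto_const_nhds.congr fun a' => is_const_of_deriv_eq_zero
      (fun x => (hD x).differentiableAt) (fun x => (hD x).deriv) a a'
  have hD_lim : Tendsto D atBot (𝓝 0) := by
    simpa using (tendsto_integral_stdNormalCDF_affine_mul_atBot b).sub
      (tendsto_stdNormalCDF_atBot.comp (tendsto_id.atBot_div_const hs))
  exact sub_eq_zero.1 (tendsto_nhds_unique hD_const hD_lim)

lemma integral_mul_stdNormalCDF_affine_mul (a b : ℝ) :
    ∫ x, x * stdNormalCDF (a + b * x) * stdNormalPDF x =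
      b * (stdNormalPDF (a / √(1 + b ^ 2)) / √(1 + b ^ 2)) := by
  have hg (x : ℝ) :
      HasDerivAt (fun x => stdNormalCDF (a + b * x)) (stdNormalPDF (a + b * x) * b) x :=
    (hasDerivAt_stdNormalCDF _).comp x (by simpa using ((hasDerivAt_id x).const_mul b).const_add a)
  have hg' := integrable_mul_stdNormalPDF_of_abs_le (f := fun x => stdNormalPDF (a + b * x) * b)
    (C := (√(2 * π))⁻¹ * |b|) (by fun_prop) fun x => by
      rw [abs_mul, abs_of_nonneg (stdNormalPDF_nonneg _)]
      exact mul_le_mul_of_nonneg_right (stdNormalPDF_le _) (abs_nonneg b)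
  calc ∫ x, x * stdNormalCDF (a + b * x) * stdNormalPDF x
      = ∫ x, stdNormalPDF (a + b * x) * stdNormalPDF x * b := by
        rw [integral_mul_stdNormalPDF_eq_integral_deriv_mul hg
          (fun x => abs_stdNormalCDF_le_one _) hg']
        congr 1; ext x; ring
    _ = _ := by rw [integral_mul_const, integral_stdNormalPDF_affine_mul, mul_comm]

/-- the partial first moment of the first extended skew-normal component of
the closed-form conditional density of the composite error term. -/
theorem partial_first_moment_esn
    (sU sV ζ : ℝ) (hU : 0 < sU) (hV : 0 < sV)
    (σ : ℝ) (hσ : σ = Real.sqrt (sU ^ 2 + sV ^ 2))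
    (lam : ℝ) (hlam : lam = sU / sV)
    (ξ : ℝ) (hξ : ξ = ζ / (lam * σ)) :
    (∫ ω : ℝ, ω * ((1 / σ) * stdNormalCDF (ξ - lam * ω / σ) * stdNormalPDF ((ω + ζ) / σ))) =
      -(ζ * stdNormalCDF (ζ / sU)) - sU * stdNormalPDF (ζ / sU) := by
  have hσ_pos : 0 < σ := hσ ▸ sqrt_pos.2 (by positivity)
  have hσ_sq : σ ^ 2 = sU ^ 2 + sV ^ 2 := hσ ▸ sq_sqrt (by positivity)
  set c := ξ + lam * ζ / σ
  have hs : √(1 + (-lam) ^ 2) = σ / sV := by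
    rw [← sqrt_sq (div_pos hσ_pos hV).le, hlam, div_pow, hσ_sq]
    congr 1; field_simp; ring
  have hc : c / (σ / sV) = ζ / sU := by
    simp only [c, hξ, hlam]; field_simp; linear_combination (-ζ) * hσ_sq
  have hΦφ : Integrable fun x => stdNormalCDF (c + -lam * x) * stdNormalPDF x :=
    integrable_mul_stdNormalPDF_of_abs_le (by fun_prop) fun x => abs_stdNormalCDF_le_one _
  set F := fun x => x * stdNormalCDF (c + -lam * x) * stdNormalPDF x -
    ζ / σ * (stdNormalCDF (c + -lam * x) * stdNormalPDF x)
  calc _ = ∫ ω, F ((ω + ζ) / σ) := by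
        congr 1; ext ω
        have harg : c + -lam * ((ω + ζ) / σ) = ξ - lam * ω / σ := by simp only [c]; ring
        simp only [F, harg]; field_simp; ring
    _ = σ * ∫ x, F x := by
        rw [integral_add_right_eq_self (fun ω => F (ω / σ)), Measure.integral_comp_div,
          abs_of_pos hσ_pos, smul_eq_mul]
    _ = σ * (-lam * (stdNormalPDF (c / √(1 + (-lam) ^ 2)) / √(1 + (-lam) ^ 2)) -
          ζ / σ * stdNormalCDF (c / √(1 + (-lam) ^ 2))) := by
        rw [integral_sub (integrable_id_mul_mul_stdNormalPDF_of_abs_le (by fun_prop)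
          fun x => abs_stdNormalCDF_le_one _) (hΦφ.const_mul _), integral_const_mul,
          integral_mul_stdNormalCDF_affine_mul, integral_stdNormalCDF_affine_mul]
    _ = _ := by rw [hs, hc, hlam]; field_simp; ring
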